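/- Let W be an ℝ^{m×d}-valued random matrix and W* ∈ ℝ^{m×d} a fixed matrix satisfying the multiplicative covariance structure E[(W−W*)_{ij}(W−W*)_{kl}] = (W*)_{ij} Σ_{jl} (W*)_{kl} for all indices, for some matrix Σ ∈ ℝ^{d×d} (with all products integrable). Let s be an ℝ^d-valued random vector and s* ∈ ℝ^d a fixed vector with E[(s−s*)(s−s*)ᵀ] = Σ (with all products integrable). Then for every fixed x ∈ ℝ^d and every fixed matrix D ∈ ℝ^{m×m}, the expected quadratic forms agree: E[ xᵀ (W−W*)ᵀ D (W−W*) x ] = E[ xᵀ diag(s−s*) (W*)ᵀ D W* diag(s−s*) x ]. -/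

import Mathlib

/-!
The quadratic form `xᵀ Aᵀ D A x` is a fixed linear combination of the products `A_ij A_kl`,
so its expectation depends on the random matrix `A` only through its second moments.
The right-hand side is this form for `A = W* diag(s − s*)`, whose second moments are
`W*_ij E[(s − s*)_j (s − s*)_l] W*_kl = W*_ij Σ_jl W*_kl`, exactly those of `W − W*`.
-/

open Matrix MeasureTheory

namespace Matrix

variable {m n R : Type*} [Fintype n]
variable {Ω Ω' : Type*} [MeasurableSpace Ω] [MeasurableSpace Ω'] {μ : Measure Ω} {ν : Measure Ω'}

theorem mul_diagonal_apply_mul_mul_diagonal_apply [CommSemiring R] [DecidableEq n]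
    (M : Matrix m n R) (v : n → R) (i : m) (j : n) (k : m) (l : n) :
    (M * diagonal v) i j * (M * diagonal v) k l = M i j * M k l * (v j * v l) := by
  simp only [mul_diagonal]
  ring

theorem integrable_mul_diagonal_apply_mul_mul_diagonal_apply [DecidableEq n] {v : Ω → n → ℝ}
    (hv : ∀ j l, Integrable (fun ω => v ω j * v ω l) μ) (M : Matrix m n ℝ)
    (i : m) (j : n) (k : m) (l : n) :
    Integrable (fun ω => (M * diagonal (v ω)) i j * (M * diagonal (v ω)) k l) μ := by
  simpa only [mul_diagonal_apply_mul_mul_diagonal_apply] using (hv j l).const_mul _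

theorem integral_mul_diagonal_apply_mul_mul_diagonal_apply [DecidableEq n] (v : Ω → n → ℝ)
    (M : Matrix m n ℝ) (i : m) (j : n) (k : m) (l : n) :
    ∫ ω, (M * diagonal (v ω)) i j * (M * diagonal (v ω)) k l ∂μ =
      M i j * (∫ ω, v ω j * v ω l ∂μ) * M k l := by
  simp only [mul_diagonal_apply_mul_mul_diagonal_apply, integral_const_mul]
  ring

variable [Fintype m]

theorem dotProduct_transpose_mul_mul_mulVec [CommSemiring R] (A : Matrix m n R)
    (D : Matrix m m R) (x : n → R) :
    x ⬝ᵥ ((Aᵀ * D * A) *ᵥ x) = ∑ i, ∑ k, ∑ j, ∑ l, D i k * x j * x l * (A i j * A k l) := by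
  rw [Matrix.mul_assoc, ← mulVec_mulVec, dotProduct_mulVec, vecMul_transpose]
  simp only [dotProduct, mulVec, mul_apply, Finset.sum_mul, Finset.mul_sum]
  refine Finset.sum_congr rfl fun i _ => ?_
  rw [Finset.sum_comm]
  refine Finset.sum_congr rfl fun k _ => ?_
  rw [Finset.sum_comm]
  exact Finset.sum_congr rfl fun j _ => Finset.sum_congr rfl fun l _ => by ring

theorem transpose_mul_diagonal_mul_mul_mul_diagonal [CommSemiring R] [DecidableEq n]
    (M : Matrix m n R) (D : Matrix m m R) (v : n → R) :
    (M * diagonal v)ᵀ * D * (M * diagonal v) = diagonal v * Mᵀ * D * M * diagonal v := by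
  simp only [transpose_mul, diagonal_transpose, Matrix.mul_assoc]

theorem integral_dotProduct_transpose_mul_mul_mulVec {A : Ω → Matrix m n ℝ}
    (hA : ∀ i j k l, Integrable (fun ω => A ω i j * A ω k l) μ) (D : Matrix m m ℝ)
    (x : n → ℝ) :
    ∫ ω, x ⬝ᵥ (((A ω)ᵀ * D * A ω) *ᵥ x) ∂μ =
      ∑ i, ∑ k, ∑ j, ∑ l, D i k * x j * x l * ∫ ω, A ω i j * A ω k l ∂μ := by
  simp only [dotProduct_transpose_mul_mul_mulVec]
  simp (disch := intros; fun_prop) only [integral_finsetSum, integral_const_mul]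

theorem integral_dotProduct_transpose_mul_mul_mulVec_eq {A : Ω → Matrix m n ℝ}
    {B : Ω' → Matrix m n ℝ} (hA : ∀ i j k l, Integrable (fun ω => A ω i j * A ω k l) μ)
    (hB : ∀ i j k l, Integrable (fun ω => B ω i j * B ω k l) ν)
    (hAB : ∀ i j k l, ∫ ω, A ω i j * A ω k l ∂μ = ∫ ω, B ω i j * B ω k l ∂ν)
    (D : Matrix m m ℝ) (x : n → ℝ) :
    ∫ ω, x ⬝ᵥ (((A ω)ᵀ * D * A ω) *ᵥ x) ∂μ = ∫ ω, x ⬝ᵥ (((B ω)ᵀ * D * B ω) *ᵥ x) ∂ν := by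
  simp only [integral_dotProduct_transpose_mul_mul_mulVec hA,
    integral_dotProduct_transpose_mul_mul_mulVec hB, hAB]

end Matrix

/-- Core of the paper's Theorem 1: if the full-rank perturbation `W − W*` has the
multiplicative covariance structure `E[(W−W*)_{ij}(W−W*)_{kl}] = (W*)_{ij} Σ_{jl} (W*)_{kl}`
and the rank-1 perturbation `s − s*` has covariance `E[(s−s*)(s−s*)ᵀ] = Σ`, then for every
fixed input `x ∈ ℝ^d` and every weighting matrix `D ∈ ℝ^{m×m}`, the expected quadratic
forms agree:
`E[xᵀ (W−W*)ᵀ D (W−W*) x] = E[xᵀ diag(s−s*) (W*)ᵀ D W* diag(s−s*) x]`. -/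
theorem expected_quadratic_forms_agree {m d : ℕ}
    {Ω₁ : Type*} [MeasurableSpace Ω₁] (μ : Measure Ω₁)
    {Ω₂ : Type*} [MeasurableSpace Ω₂] (ν : Measure Ω₂)
    (W : Ω₁ → Matrix (Fin m) (Fin d) ℝ) (Wstar : Matrix (Fin m) (Fin d) ℝ)
    (s : Ω₂ → Fin d → ℝ) (sstar : Fin d → ℝ) (Sig : Matrix (Fin d) (Fin d) ℝ)
    (hWint : ∀ i j k l,
      Integrable (fun ω => (W ω i j - Wstar i j) * (W ω k l - Wstar k l)) μ)
    (hWcov : ∀ i j k l,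
      (∫ ω, (W ω i j - Wstar i j) * (W ω k l - Wstar k l) ∂μ) =
        Wstar i j * Sig j l * Wstar k l)
    (hsint : ∀ j l, Integrable (fun ω => (s ω j - sstar j) * (s ω l - sstar l)) ν)
    (hscov : ∀ j l, (∫ ω, (s ω j - sstar j) * (s ω l - sstar l) ∂ν) = Sig j l) :
    ∀ (x : Fin d → ℝ) (D : Matrix (Fin m) (Fin m) ℝ),
      (∫ ω, x ⬝ᵥ (((W ω - Wstar)ᵀ * D * (W ω - Wstar)).mulVec x) ∂μ) =
        ∫ ω, x ⬝ᵥ ((diagonal (fun j => s ω j - sstar j) * Wstarᵀ * D * Wstar *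
          diagonal (fun j => s ω j - sstar j)).mulVec x) ∂ν := by
  intro x D
  simp only [← transpose_mul_diagonal_mul_mul_mul_diagonal]
  refine integral_dotProduct_transpose_mul_mul_mulVec_eq hWint
    (integrable_mul_diagonal_apply_mul_mul_diagonal_apply hsint Wstar)
    (fun i j k l => ?_) D x
  rw [integral_mul_diagonal_apply_mul_mul_diagonal_apply, hscov]
  exact hWcov i j k l
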